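/- The value α(m) appearing in the n-th iterate of the baker map equals the bit-reversal of m−1: if m − 1 = Σ_{k=0}^{n−1} b_k 2^k with b_k ∈ {0,1}, then α(m) = Σ_{k=0}^{n−1} b_k / 2^{k+1}. -/
import Mathlib

/-- α(1) = 0 and, at level n, α(m) = α(m − 2^{n−1}) + 1/2ⁿ for 2^{n−1} < m ≤ 2ⁿ;
for m ≤ 2^{n-1} the recursion descends to level n−1. -/
noncomputable def bakerAlpha : ℕ → ℕ → ℝ
  | 0, _ => 0
  | n + 1, m => if m ≤ 2 ^ n then bakerAlpha n m else bakerAlpha n (m - 2 ^ n) + 1 / 2 ^ (n + 1)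

/-- α(m) is the bit-reversal of m−1: writing m−1 = Σ_{k<n} b_k 2^k in binary,
α(m) = Σ_{k<n} b_k / 2^{k+1}, i.e. the n-bit reversal of m−1 divided by 2ⁿ. -/
theorem bakerAlpha_eq_bit_reversal (n m : ℕ) (h1 : 1 ≤ m) (h2 : m ≤ 2 ^ n) :
    bakerAlpha n m =
      ∑ k ∈ Finset.range n, (if Nat.testBit (m - 1) k then (1 : ℝ) else 0) / 2 ^ (k + 1) := by
  induction n generalizing m with
  | zero =>
    interval_cases m
    simp [bakerAlpha]
  | succ n ih =>
    rw [Finset.sum_range_succ]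
    by_cases h : m ≤ 2 ^ n
    · have hb : Nat.testBit (m - 1) n = false := by
        apply Nat.testBit_lt_two_pow
        omega
      rw [bakerAlpha, if_pos h, ih m h1 h, hb]
      simp
    · have h' : 2 ^ n < m := by omega
      have h1' : 1 ≤ m - 2 ^ n := by omega
      have h2' : m - 2 ^ n ≤ 2 ^ n := by
        have : m ≤ 2 ^ (n + 1) := h2
        have : 2 ^ (n + 1) = 2 ^ n + 2 ^ n := by ring
        omega
      rw [bakerAlpha, if_neg h, ih _ h1' h2']
      have key : m - 1 = 2 ^ n + (m - 2 ^ n - 1) := by omega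
      have hlt : m - 2 ^ n - 1 < 2 ^ n := by omega
      have hbn : Nat.testBit (m - 1) n = true := by
        rw [key, Nat.testBit_two_pow_add_eq, Nat.testBit_lt_two_pow hlt]
        rfl
      have hbk : ∀ k < n, Nat.testBit (m - 1) k = Nat.testBit (m - 2 ^ n - 1) k := by
        intro k hk
        rw [key, Nat.testBit_two_pow_add_gt hk]
      rw [hbn]
      have hs : ∑ k ∈ Finset.range n,
            (if Nat.testBit (m - 2 ^ n - 1) k then (1 : ℝ) else 0) / 2 ^ (k + 1) =
          ∑ k ∈ Finset.range n, (if Nat.testBit (m - 1) k then (1 : ℝ) else 0) / 2 ^ (k + 1) :=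
        Finset.sum_congr rfl fun k hk => by rw [hbk k (Finset.mem_range.mp hk)]
      rw [hs]
      simp
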